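/- arXiv:1705.11156 — 2 statements merged into one kernel-verified Lean document; each statement's English description precedes it below -/
import Mathlib

section
/- Let f : ℝ² → ℝ be a non-degenerate weighted homogeneous polynomial of type (d; w₁, w₂) with w₁ ≥ w₂. Then there exist C > 0 and a neighborhood U of 0 such that ‖∇f(x)‖ ≥ C‖x‖^{(d−w₂)/w₂} for all x ∈ U; consequently L(f) ≤ d/w₂ − 1. -/
open MvPolynomial

/-- Euclidean norm of the gradient of a polynomial `f` at `x`. -/
noncomputable def gradNorm {n : ℕ} (f : MvPolynomial (Fin n) ℝ) (x : Fin n → ℝ) : ℝ :=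
  Real.sqrt (∑ i, (eval x (pderiv i f)) ^ 2)

/-- Euclidean norm on `Fin n → ℝ`. -/
noncomputable def eNorm {n : ℕ} (x : Fin n → ℝ) : ℝ :=
  Real.sqrt (∑ i, (x i) ^ 2)

/-- `f` is weighted homogeneous of type `(d; w)`: every monomial `x^α` appearing in `f`
satisfies `∑ i, α i * w i = d`. -/
def IsWeightedHomog {n : ℕ} (f : MvPolynomial (Fin n) ℝ) (w : Fin n → ℕ) (d : ℕ) : Prop :=
  ∀ α ∈ f.support, ∑ i, α i * w i = d

/-- `f` is non-degenerate (isolated singularity at the origin): in some neighborhood of `0`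
the gradient of `f` vanishes only at the origin. -/
def Nondeg {n : ℕ} (f : MvPolynomial (Fin n) ℝ) : Prop :=
  ∃ U ∈ nhds (0 : Fin n → ℝ), ∀ x ∈ U, (∀ i, eval x (pderiv i f) = 0) → x = 0

/-- The Łojasiewicz inequality `‖∇f(x)‖ ≥ C ‖x‖^lam` holds near `0` for some `C > 0`. -/
def LojIneq {n : ℕ} (f : MvPolynomial (Fin n) ℝ) (lam : ℝ) : Prop :=
  ∃ C > (0 : ℝ), ∃ U ∈ nhds (0 : Fin n → ℝ), ∀ x ∈ U, C * eNorm x ^ lam ≤ gradNorm f x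

/-- The Łojasiewicz exponent of `f`: the infimum of all `lam > 0` for which the
Łojasiewicz inequality holds near the origin. -/
noncomputable def lojExp {n : ℕ} (f : MvPolynomial (Fin n) ℝ) : ℝ :=
  sInf {lam : ℝ | 0 < lam ∧ LojIneq f lam}

/-- The weighted "radius" `ρ(x) = (∑ i |x i| ^ (2 / w i)) ^ (1/2)`. -/
noncomputable def rho {n : ℕ} (w : Fin n → ℕ) (x : Fin n → ℝ) : ℝ :=
  Real.sqrt (∑ i, |x i| ^ ((2 : ℝ) / (w i : ℝ)))

/-- The weighted norm of the gradient:
`‖grad_w f(x)‖_w = (∑ i ρ(x)^(2 wᵢ) |∂f/∂xᵢ(x)|²)^(1/2)`. -/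
noncomputable def wGradNorm {n : ℕ} (w : Fin n → ℕ) (f : MvPolynomial (Fin n) ℝ)
    (x : Fin n → ℝ) : ℝ :=
  Real.sqrt (∑ i, rho w x ^ (2 * w i) * (eval x (pderiv i f)) ^ 2)

/-!
The substitution `x ↦ (t ^ wᵢ xᵢ)ᵢ` multiplies `∂ᵢf` by `t ^ (d - wᵢ)`, so the critical set of `f`
is invariant under the weighted scaling and non-degeneracy forces `∇f ≠ 0` off the origin.
Every `x` with `ρ(x) ≤ 1` is the scaling by `t = ρ(x)` of a point `y` of the compact weighted
sphere `ρ = 1`, on which `‖∇f‖ ≥ m > 0`; since `wᵢ ≥ w₂` and `t ≤ 1`, this gives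
`‖∇f(x)‖ ≥ m ρ(x) ^ (d - w₂)`, and `‖x‖ ≤ √2 ρ(x) ^ w₂` turns it into the Łojasiewicz inequality
with exponent `(d - w₂) / w₂`.
-/

section WeightedHomogeneous

variable {n : ℕ} {f : MvPolynomial (Fin n) ℝ} {w : Fin n → ℕ} {d : ℕ}

theorem IsWeightedHomog.eval_scale (hf : IsWeightedHomog f w d) (t : ℝ) (x : Fin n → ℝ) :
    eval (fun i => t ^ w i * x i) f = t ^ d * eval x f := by
  rw [eval_eq', eval_eq', Finset.mul_sum]
  refine Finset.sum_congr rfl fun α hα => ?_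
  simp_rw [mul_pow, Finset.prod_mul_distrib, ← pow_mul, Finset.prod_pow_eq_pow_sum,
    mul_comm (w _), hf α hα]
  ring

theorem IsWeightedHomog.weight_add_eq_of_mem_support_pderiv (hf : IsWeightedHomog f w d)
    {i : Fin n} {β : Fin n →₀ ℕ} (hβ : β ∈ (pderiv i f).support) :
    ∑ j, β j * w j + w i = d := by
  rw [mem_support_iff, coeff_pderiv] at hβ
  have hα := hf _ (mem_support_iff.2 (left_ne_zero_of_mul hβ))
  simpa [add_mul, Finset.sum_add_distrib, Finsupp.single_apply] using hα

-- The truncated `d - w i` is harmless: `pderiv i f = 0` when `d < w i`.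
theorem isWeightedHomog_pderiv (hf : IsWeightedHomog f w d) (i : Fin n) :
    IsWeightedHomog (pderiv i f) w (d - w i) := fun _ hβ => by
  have := hf.weight_add_eq_of_mem_support_pderiv hβ
  omega

theorem IsWeightedHomog.le_of_pderiv_ne_zero (hf : IsWeightedHomog f w d) {i : Fin n}
    (hi : pderiv i f ≠ 0) : w i ≤ d := by
  obtain ⟨β, hβ⟩ := support_nonempty.2 hi
  have := hf.weight_add_eq_of_mem_support_pderiv hβ
  omega

end WeightedHomogeneous

section Gradient

variable {n : ℕ} {f : MvPolynomial (Fin n) ℝ} {w : Fin n → ℕ} {d : ℕ}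

theorem continuous_gradNorm (f : MvPolynomial (Fin n) ℝ) : Continuous (gradNorm f) := by
  unfold gradNorm
  have := fun i => (pderiv i f).continuous_eval
  fun_prop

theorem gradNorm_pos_iff {x : Fin n → ℝ} : 0 < gradNorm f x ↔ ∃ i, eval x (pderiv i f) ≠ 0 := by
  simp [gradNorm, Finset.sum_pos_iff_of_nonneg fun i _ => sq_nonneg (eval x (pderiv i f)), sq_pos_iff]

theorem IsWeightedHomog.pow_mul_gradNorm_le (hf : IsWeightedHomog f w d) {w₀ : ℕ}
    (hw : ∀ i, w₀ ≤ w i) {t : ℝ} (ht₀ : 0 ≤ t) (ht₁ : t ≤ 1) (y : Fin n → ℝ) :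
    t ^ (d - w₀) * gradNorm f y ≤ gradNorm f (fun i => t ^ w i * y i) := by
  unfold gradNorm
  rw [← Real.sqrt_sq (pow_nonneg ht₀ _), ← Real.sqrt_mul (sq_nonneg _), Finset.mul_sum]
  refine Real.sqrt_le_sqrt (Finset.sum_le_sum fun i _ => ?_)
  rw [(isWeightedHomog_pderiv hf i).eval_scale, mul_pow, ← pow_mul, ← pow_mul]
  exact mul_le_mul_of_nonneg_right (pow_le_pow_of_le_one ht₀ ht₁ (by have := hw i; omega))
    (sq_nonneg _)

theorem IsWeightedHomog.gradNorm_pos (hf : IsWeightedHomog f w d) (hw : ∀ i, 0 < w i)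
    (hnd : Nondeg f) {x : Fin n → ℝ} (hx : x ≠ 0) : 0 < gradNorm f x := by
  obtain ⟨U, hU, hUnd⟩ := hnd
  have hscale : Filter.Tendsto (fun s : ℝ => fun i => s ^ w i * x i) (nhdsWithin 0 (Set.Ioi 0))
      (nhds 0) := by
    have hcont : Continuous fun s : ℝ => fun i => s ^ w i * x i := by fun_prop
    simpa [zero_pow (hw _).ne', ← Pi.zero_def] using (hcont.tendsto 0).mono_left nhdsWithin_le_nhds
  obtain ⟨s, hsU, hs⟩ := ((hscale.eventually hU).and self_mem_nhdsWithin).exists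
  by_contra h
  have hcrit : ∀ i, eval x (pderiv i f) = 0 := by simpa [gradNorm_pos_iff] using h
  have h0 := hUnd _ hsU fun i => by
    rw [(isWeightedHomog_pderiv hf i).eval_scale, hcrit i, mul_zero]
  exact hx (funext fun i => by simpa [(pow_pos hs _).ne'] using congrFun h0 i)

end Gradient

section WeightedRadius

variable {n : ℕ} {w : Fin n → ℕ}

theorem rho_nonneg (w : Fin n → ℕ) (x : Fin n → ℝ) : 0 ≤ rho w x := Real.sqrt_nonneg _

theorem rho_zero (hw : ∀ i, 0 < w i) : rho w 0 = 0 := by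
  simp [rho, fun i => (hw i).ne']

theorem continuous_rho (w : Fin n → ℕ) : Continuous (rho w) :=
  Real.continuous_sqrt.comp <| continuous_finsetSum _ fun i _ =>
    (continuous_apply i).abs.rpow_const fun _ => Or.inr (by positivity)

theorem rho_scale (hw : ∀ i, 0 < w i) {t : ℝ} (ht : 0 ≤ t) (y : Fin n → ℝ) :
    rho w (fun i => t ^ w i * y i) = t * rho w y := by
  have hterm : ∀ i, |t ^ w i * y i| ^ ((2 : ℝ) / w i) = t ^ 2 * |y i| ^ ((2 : ℝ) / w i) := by
    intro i
    have hwi : (w i : ℝ) ≠ 0 := Nat.cast_ne_zero.2 (hw i).ne'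
    rw [abs_mul, abs_of_nonneg (pow_nonneg ht _), Real.mul_rpow (pow_nonneg ht _) (abs_nonneg _),
      ← Real.rpow_natCast, ← Real.rpow_mul ht, mul_div_cancel₀ _ hwi, Real.rpow_two]
  rw [rho, rho, Finset.sum_congr rfl fun i _ => hterm i, ← Finset.mul_sum,
    Real.sqrt_mul (sq_nonneg _), Real.sqrt_sq ht]

theorem abs_le_rho_pow (hw : ∀ i, 0 < w i) (x : Fin n → ℝ) (i : Fin n) :
    |x i| ≤ rho w x ^ w i := by
  have hwi : (w i : ℝ) ≠ 0 := Nat.cast_ne_zero.2 (hw i).ne'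
  have hroot : |x i| ^ ((w i : ℝ)⁻¹) ≤ rho w x := by
    refine Real.le_sqrt_of_sq_le ?_
    rw [← Real.rpow_natCast, ← Real.rpow_mul (abs_nonneg _), Nat.cast_ofNat, inv_mul_eq_div]
    exact Finset.single_le_sum (f := fun j => |x j| ^ ((2 : ℝ) / w j))
      (fun j _ => by positivity) (Finset.mem_univ i)
  calc |x i| = (|x i| ^ ((w i : ℝ)⁻¹)) ^ w i := by
        rw [← Real.rpow_natCast, ← Real.rpow_mul (abs_nonneg _), inv_mul_cancel₀ hwi,
          Real.rpow_one]
    _ ≤ rho w x ^ w i := by gcongr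

theorem rho_pos (hw : ∀ i, 0 < w i) {x : Fin n → ℝ} (hx : x ≠ 0) : 0 < rho w x := by
  refine (rho_nonneg w x).lt_of_ne fun h => hx (funext fun i => ?_)
  simpa [← h, zero_pow (hw i).ne'] using abs_le_rho_pow hw x i

theorem isCompact_rho_eq_one (hw : ∀ i, 0 < w i) : IsCompact {y : Fin n → ℝ | rho w y = 1} := by
  refine Metric.isCompact_of_isClosed_isBounded (isClosed_eq (continuous_rho w) continuous_const)
    ((Metric.isBounded_closedBall (x := 0) (r := 1)).subset fun y (hy : rho w y = 1) => ?_)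
  rw [mem_closedBall_zero_iff, pi_norm_le_iff_of_nonneg zero_le_one]
  intro i
  simpa [hy] using abs_le_rho_pow hw y i

theorem exists_rho_eq_one_and_eq_scale [NeZero n] (hw : ∀ i, 0 < w i) (x : Fin n → ℝ) :
    ∃ y, rho w y = 1 ∧ x = fun i => rho w x ^ w i * y i := by
  have hnormalize : ∀ z : Fin n → ℝ, z ≠ 0 →
      rho w (fun i => (rho w z)⁻¹ ^ w i * z i) = 1 ∧
        z = fun i => rho w z ^ w i * ((rho w z)⁻¹ ^ w i * z i) := fun z hz => by
    have hρ := (rho_pos hw hz).ne'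
    refine ⟨by rw [rho_scale hw (inv_nonneg.2 (rho_nonneg w z)), inv_mul_cancel₀ hρ], ?_⟩
    funext i
    rw [inv_pow, mul_inv_cancel_left₀ (pow_ne_zero _ hρ)]
  by_cases hx : x = 0
  · have hone : (fun _ => 1 : Fin n → ℝ) ≠ 0 := fun h => one_ne_zero (congrFun h 0)
    refine ⟨_, (hnormalize _ hone).1, ?_⟩
    funext i
    simp [hx, rho_zero hw, zero_pow (hw i).ne']
  · exact ⟨_, hnormalize x hx⟩

end WeightedRadius

section Lojasiewicz

variable {n : ℕ} {f : MvPolynomial (Fin n) ℝ} {w : Fin n → ℕ} {d w₀ : ℕ}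

theorem eNorm_le_sqrt_mul_rho_pow (hw₀ : 0 < w₀) (hw : ∀ i, w₀ ≤ w i) {x : Fin n → ℝ}
    (hx : rho w x ≤ 1) : eNorm x ≤ √n * rho w x ^ w₀ := by
  have hcoord : ∀ i, x i ^ 2 ≤ (rho w x ^ w₀) ^ 2 := fun i => by
    rw [← sq_abs]
    gcongr
    exact (abs_le_rho_pow (fun j => hw₀.trans_le (hw j)) x i).trans
      (pow_le_pow_of_le_one (rho_nonneg w x) hx (hw i))
  calc eNorm x ≤ √(∑ _ : Fin n, (rho w x ^ w₀) ^ 2) :=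
        Real.sqrt_le_sqrt (Finset.sum_le_sum fun i _ => hcoord i)
    _ = √n * rho w x ^ w₀ := by
        rw [Finset.sum_const, Finset.card_univ, Fintype.card_fin, nsmul_eq_mul,
          Real.sqrt_mul n.cast_nonneg, Real.sqrt_sq (pow_nonneg (rho_nonneg w x) _)]

variable [NeZero n]

theorem IsWeightedHomog.le_of_nondeg (hf : IsWeightedHomog f w d) (hw₀ : 0 < w₀)
    (hw : ∀ i, w₀ ≤ w i) (hnd : Nondeg f) : w₀ ≤ d := by
  have hone : (fun _ => 1 : Fin n → ℝ) ≠ 0 := fun h => one_ne_zero (congrFun h 0)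
  obtain ⟨i, hi⟩ := gradNorm_pos_iff.1 (hf.gradNorm_pos (fun j => hw₀.trans_le (hw j)) hnd hone)
  exact (hw i).trans (hf.le_of_pderiv_ne_zero fun h => hi (by rw [h, map_zero]))

theorem IsWeightedHomog.exists_pos_mul_rho_pow_le_gradNorm (hf : IsWeightedHomog f w d)
    (hw₀ : 0 < w₀) (hw : ∀ i, w₀ ≤ w i) (hnd : Nondeg f) :
    ∃ m > 0, ∀ x, rho w x ≤ 1 → m * rho w x ^ (d - w₀) ≤ gradNorm f x := by
  have hwpos : ∀ i, 0 < w i := fun i => hw₀.trans_le (hw i)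
  obtain ⟨m, hm, hmin⟩ := (isCompact_rho_eq_one hwpos).exists_forall_le'
    (continuous_gradNorm f).continuousOn fun y (hy : rho w y = 1) =>
      hf.gradNorm_pos hwpos hnd fun h => by simp [h, rho_zero hwpos] at hy
  refine ⟨m, hm, fun x hx => ?_⟩
  obtain ⟨y, hy, hxy⟩ := exists_rho_eq_one_and_eq_scale hwpos x
  calc m * rho w x ^ (d - w₀) ≤ rho w x ^ (d - w₀) * gradNorm f y := by
        rw [mul_comm]
        exact mul_le_mul_of_nonneg_left (hmin y hy) (pow_nonneg (rho_nonneg w x) _)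
    _ ≤ gradNorm f x := by
        conv_rhs => rw [hxy]
        exact hf.pow_mul_gradNorm_le hw (rho_nonneg w x) hx y

theorem IsWeightedHomog.lojIneq (hf : IsWeightedHomog f w d) (hw₀ : 0 < w₀)
    (hw : ∀ i, w₀ ≤ w i) (hnd : Nondeg f) : LojIneq f (((d : ℝ) - w₀) / w₀) := by
  obtain ⟨m, hm, hbound⟩ := hf.exists_pos_mul_rho_pow_le_gradNorm hw₀ hw hnd
  have hd : (w₀ : ℝ) ≤ d := by exact_mod_cast hf.le_of_nondeg hw₀ hw hnd
  set lam : ℝ := ((d : ℝ) - w₀) / w₀ with hlam_def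
  have hdeg : ((d - w₀ : ℕ) : ℝ) = w₀ * lam := by
    rw [Nat.cast_sub (by exact_mod_cast hd), hlam_def]
    field_simp
  have hlam : 0 ≤ lam := div_nonneg (sub_nonneg.2 hd) w₀.cast_nonneg
  have hsqrt : 0 < √(n : ℝ) ^ lam := by
    have : (0 : ℝ) < n := by exact_mod_cast Nat.pos_of_neZero n
    positivity
  refine ⟨m / √(n : ℝ) ^ lam, by positivity, {x | rho w x < 1},
    (isOpen_lt (continuous_rho w) continuous_const).mem_nhds (by simp [rho_zero (fun i =>
      hw₀.trans_le (hw i))]), fun x (hx : rho w x < 1) => ?_⟩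
  calc m / √(n : ℝ) ^ lam * eNorm x ^ lam
      ≤ m / √(n : ℝ) ^ lam * (√n * rho w x ^ w₀) ^ lam := by
        gcongr
        · exact Real.sqrt_nonneg _
        · exact eNorm_le_sqrt_mul_rho_pow hw₀ hw hx.le
    _ = m * rho w x ^ (d - w₀) := by
        rw [Real.mul_rpow (Real.sqrt_nonneg _) (pow_nonneg (rho_nonneg w x) _),
          ← Real.rpow_natCast (rho w x) w₀, ← Real.rpow_mul (rho_nonneg w x), ← hdeg,
          Real.rpow_natCast]
        field_simp
    _ ≤ gradNorm f x := hbound x hx.le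

end Lojasiewicz

section Exponent

variable {n : ℕ} {f : MvPolynomial (Fin n) ℝ} {lam lam' : ℝ}

theorem LojIneq.mono (h : LojIneq f lam) (hlam : 0 ≤ lam) (hle : lam ≤ lam') : LojIneq f lam' := by
  obtain ⟨C, hC, U, hU, hineq⟩ := h
  have hcont : Continuous (eNorm (n := n)) := by
    unfold eNorm
    fun_prop
  have hsmall : {x | eNorm x < 1} ∈ nhds (0 : Fin n → ℝ) :=
    (isOpen_lt hcont continuous_const).mem_nhds (by simp [eNorm])
  refine ⟨C, hC, U ∩ {x | eNorm x < 1}, Filter.inter_mem hU hsmall, fun x hx => ?_⟩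
  calc C * eNorm x ^ lam' ≤ C * eNorm x ^ lam := mul_le_mul_of_nonneg_left
        (Real.rpow_le_rpow_of_exponent_ge' (Real.sqrt_nonneg _) hx.2.le hlam hle) hC.le
    _ ≤ gradNorm f x := hineq x hx.1

theorem lojExp_le (h : LojIneq f lam) (hlam : 0 ≤ lam) : lojExp f ≤ lam := by
  refine le_of_forall_pos_le_add fun ε hε => csInf_le ⟨0, fun _ hl => hl.1.le⟩ ?_
  exact ⟨by linarith, h.mono hlam (by linarith)⟩

end Exponent

theorem stmt10_general (d w₁ w₂ : ℕ) (hw₂ : 0 < w₂) (hw : w₂ ≤ w₁)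
    (f : MvPolynomial (Fin 2) ℝ)
    (hhom : IsWeightedHomog f ![w₁, w₂] d)
    (hnd : Nondeg f) :
    (∃ C > (0 : ℝ), ∃ U ∈ nhds (0 : Fin 2 → ℝ), ∀ x ∈ U,
      C * eNorm x ^ (((d : ℝ) - w₂) / w₂) ≤ gradNorm f x) ∧
    lojExp f ≤ (d : ℝ) / w₂ - 1 := by
  have hweights : ∀ i, w₂ ≤ ![w₁, w₂] i := Fin.forall_fin_two.2 ⟨hw, le_rfl⟩
  have hloj : LojIneq f (((d : ℝ) - w₂) / w₂) := hhom.lojIneq hw₂ hweights hnd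
  have hdeg : (w₂ : ℝ) ≤ d := by exact_mod_cast hhom.le_of_nondeg hw₂ hweights hnd
  refine ⟨hloj, ?_⟩
  calc lojExp f ≤ ((d : ℝ) - w₂) / w₂ := lojExp_le hloj (div_nonneg (by linarith) w₂.cast_nonneg)
    _ = (d : ℝ) / w₂ - 1 := by field_simp

theorem stmt10 (d w₁ w₂ : ℕ) (hd : 0 < d) (hw₂ : 0 < w₂) (hw : w₂ ≤ w₁)
    (f : MvPolynomial (Fin 2) ℝ)
    (hhom : IsWeightedHomog f ![w₁, w₂] d)
    (hnd : Nondeg f) :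
    (∃ C > (0 : ℝ), ∃ U ∈ nhds (0 : Fin 2 → ℝ), ∀ x ∈ U,
      C * eNorm x ^ (((d : ℝ) - w₂) / w₂) ≤ gradNorm f x) ∧
    lojExp f ≤ (d : ℝ) / w₂ - 1 :=
  stmt10_general d w₁ w₂ hw₂ hw f hhom hnd
end

section
/- The polynomial f(x, y) = x³ + x y⁶ + y⁹ (weighted homogeneous of type (9; 3, 1) with an isolated singularity at the origin) has Łojasiewicz exponent L(f) = 6. -/
open MvPolynomial

/-!
Upper bound: near `0`, `‖∇f‖ ≥ |∂f/∂x| = 3x² + y⁶ ≥ x⁶ + y⁶ ≥ (x² + y²)³ / 4`.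
Lower bound: `∂f/∂y = 3y⁵(2x + 3y³)` vanishes on the curve `x = -3y³/2`, along which
`‖∇f‖ = 31y⁶/4` while `‖(x, y)‖ ≥ |y|`; so no exponent below `6` is admissible.
-/

open Filter Topology

lemma sq_eNorm {n : ℕ} (x : Fin n → ℝ) : eNorm x ^ 2 = ∑ i, x i ^ 2 :=
  Real.sq_sqrt (Finset.sum_nonneg fun i _ => sq_nonneg (x i))

lemma abs_le_eNorm {n : ℕ} (x : Fin n → ℝ) (i : Fin n) : |x i| ≤ eNorm x := by
  rw [← Real.sqrt_sq_eq_abs]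
  exact Real.sqrt_le_sqrt
    (Finset.single_le_sum (fun j _ => sq_nonneg (x j)) (Finset.mem_univ i))

lemma abs_eval_pderiv_le_gradNorm {n : ℕ} (f : MvPolynomial (Fin n) ℝ) (x : Fin n → ℝ)
    (i : Fin n) : |eval x (pderiv i f)| ≤ gradNorm f x :=
  abs_le_eNorm (fun j => eval x (pderiv j f)) i

lemma eventually_forall_sq_apply_le_one {n : ℕ} :
    ∀ᶠ x in 𝓝 (0 : Fin n → ℝ), ∀ i, x i ^ 2 ≤ 1 := by
  refine eventually_all.2 fun i => ?_
  have hcont : Continuous fun x : Fin n → ℝ => x i ^ 2 := (continuous_apply i).pow 2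
  exact (hcont.tendsto 0).eventually_le_const (by simp)

lemma LojIneq.le_of_curve {n : ℕ} {f : MvPolynomial (Fin n) ℝ} {lam μ K : ℝ}
    (γ : ℝ → Fin n → ℝ) (hγ : Tendsto γ (𝓝[>] 0) (𝓝 0))
    (hnorm : ∀ t > 0, t ≤ eNorm (γ t)) (hgrad : ∀ t > 0, gradNorm f (γ t) ≤ K * t ^ μ)
    (hlam : 0 < lam) (h : LojIneq f lam) : μ ≤ lam := by
  obtain ⟨C, hC, U, hU, hineq⟩ := h
  by_contra! hlt
  have hbound : ∀ᶠ t in 𝓝[>] 0, C ≤ K * t ^ (μ - lam) := by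
    filter_upwards [hγ hU, self_mem_nhdsWithin] with t htU (ht : 0 < t)
    have htlam : 0 < t ^ lam := Real.rpow_pos_of_pos ht lam
    refine le_of_mul_le_mul_right ?_ htlam
    calc C * t ^ lam ≤ C * eNorm (γ t) ^ lam :=
          mul_le_mul_of_nonneg_left (Real.rpow_le_rpow ht.le (hnorm t ht) hlam.le) hC.le
      _ ≤ gradNorm f (γ t) := hineq _ htU
      _ ≤ K * t ^ μ := hgrad t ht
      _ = K * t ^ (μ - lam) * t ^ lam := by
          rw [mul_assoc, ← Real.rpow_add ht, sub_add_cancel]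
  have hlim : Tendsto (fun t : ℝ => K * t ^ (μ - lam)) (𝓝[>] 0) (𝓝 0) := by
    have hpos : 0 < μ - lam := sub_pos.2 hlt
    have hpow := (Real.continuousAt_rpow_const 0 (μ - lam) (Or.inr hpos.le)).tendsto
    rw [Real.zero_rpow hpos.ne'] at hpow
    simpa using (hpow.const_mul K).mono_left nhdsWithin_le_nhds
  exact hC.not_ge (ge_of_tendsto hlim hbound)

local notation "F" => ((X 0) ^ 3 + X 0 * (X 1) ^ 6 + (X 1) ^ 9 : MvPolynomial (Fin 2) ℝ)

lemma eval_pderiv_zero_F (x : Fin 2 → ℝ) : eval x (pderiv 0 F) = 3 * x 0 ^ 2 + x 1 ^ 6 := by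
  simp [pderiv_X]

lemma eval_pderiv_one_F (x : Fin 2 → ℝ) :
    eval x (pderiv 1 F) = 3 * x 1 ^ 5 * (2 * x 0 + 3 * x 1 ^ 3) := by
  simp [pderiv_X]
  ring

lemma gradNorm_F (x : Fin 2 → ℝ) :
    gradNorm F x = Real.sqrt ((3 * x 0 ^ 2 + x 1 ^ 6) ^ 2
      + (3 * x 1 ^ 5 * (2 * x 0 + 3 * x 1 ^ 3)) ^ 2) := by
  rw [gradNorm, Fin.sum_univ_two, eval_pderiv_zero_F, eval_pderiv_one_F]

lemma lojIneq_F_six : LojIneq F 6 := by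
  refine ⟨1 / 4, by norm_num, _, eventually_forall_sq_apply_le_one, fun x hx => ?_⟩
  set a := x 0 ^ 2
  set b := x 1 ^ 2
  have ha0 : 0 ≤ a := sq_nonneg _
  have hb0 : 0 ≤ b := sq_nonneg _
  have ha : a ^ 3 ≤ a := pow_le_of_le_one ha0 (hx 0) (by norm_num)
  have hnorm : eNorm x ^ (6 : ℝ) = (a + b) ^ 3 := by
    rw [Real.rpow_ofNat, show 6 = 2 * 3 by rfl, pow_mul, sq_eNorm, Fin.sum_univ_two]
  have hgrad : 3 * a + b ^ 3 ≤ gradNorm F x := by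
    calc 3 * a + b ^ 3 = eval x (pderiv 0 F) := by rw [eval_pderiv_zero_F]; ring
      _ ≤ |eval x (pderiv 0 F)| := le_abs_self _
      _ ≤ gradNorm F x := abs_eval_pderiv_le_gradNorm F x 0
  have hconv : (a + b) ^ 3 ≤ 4 * (a ^ 3 + b ^ 3) := by
    nlinarith [mul_nonneg (add_nonneg ha0 hb0) (sq_nonneg (a - b))]
  rw [hnorm]
  linarith

lemma six_le_of_lojIneq_F {lam : ℝ} (hlam : 0 < lam) (h : LojIneq F lam) : 6 ≤ lam := by
  let γ : ℝ → Fin 2 → ℝ := fun t => ![-3 / 2 * t ^ 3, t]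
  have hγ : Tendsto γ (𝓝[>] 0) (𝓝 0) := by
    have hcont : Continuous γ := by
      refine continuous_pi fun i => ?_
      fin_cases i <;> simp [γ] <;> fun_prop
    have hγ0 : γ 0 = 0 := by
      ext i
      fin_cases i <;> simp [γ]
    simpa [hγ0] using (hcont.tendsto 0).mono_left nhdsWithin_le_nhds
  refine LojIneq.le_of_curve γ hγ (fun t ht => ?_) (fun t ht => ?_) hlam h (K := 31 / 4)
  · simpa [γ, abs_of_pos ht] using abs_le_eNorm (γ t) 1
  · rw [gradNorm_F, Real.rpow_ofNat]
    apply le_of_eq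
    rw [show (3 * γ t 0 ^ 2 + γ t 1 ^ 6) = 31 / 4 * t ^ 6 by simp [γ]; ring,
      show 2 * γ t 0 + 3 * γ t 1 ^ 3 = 0 by simp [γ]; ring, mul_zero, zero_pow two_ne_zero, add_zero, Real.sqrt_sq (by positivity)]

theorem stmt13 :
    lojExp ((X 0) ^ 3 + X 0 * (X 1) ^ 6 + (X 1) ^ 9 : MvPolynomial (Fin 2) ℝ) = 6 :=
  IsLeast.csInf_eq ⟨⟨by norm_num, lojIneq_F_six⟩, fun _ ⟨hlam, h⟩ => six_le_of_lojIneq_F hlam h⟩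
end
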